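/- Let η^{αβ} be a constant symmetric invertible real n×n matrix, and let F : ℝⁿ → ℝ and H = (H^1,…,H^n) be smooth functions on ℝⁿ satisfying η^{βν} η^{ρκ} ∂_α∂_ρ∂_ν F ∂_γ∂_κ F = ∂_α∂_γ H^β for all α,β,γ at every point. Then F satisfies the associativity (WDVV-type) equations and H satisfies the oriented associativity equations (AE). -/

import Mathlib

/-- Partial derivative of `f` in the `i`-th coordinate direction on `ℝⁿ`. -/
noncomputable def pd {n : ℕ} (i : Fin n) (f : (Fin n → ℝ) → ℝ) : (Fin n → ℝ) → ℝ :=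
  fun x => fderiv ℝ f x (Pi.single i 1)

lemma pd_contDiff {n : ℕ} (i : Fin n) {f : (Fin n → ℝ) → ℝ} (hf : ContDiff ℝ (⊤ : ℕ∞) f) :
    ContDiff ℝ (⊤ : ℕ∞) (pd i f) :=
  (hf.fderiv_right (by simp)).clm_apply contDiff_const

lemma pd_diffAt {n : ℕ} (i : Fin n) {f : (Fin n → ℝ) → ℝ} (hf : ContDiff ℝ (⊤ : ℕ∞) f)
    (x : Fin n → ℝ) : DifferentiableAt ℝ (pd i f) x :=
  ((pd_contDiff i hf).differentiable (by simp)).differentiableAt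

lemma pd_comm {n : ℕ} (i j : Fin n) {f : (Fin n → ℝ) → ℝ} (hf : ContDiff ℝ (⊤ : ℕ∞) f)
    (x : Fin n → ℝ) : pd i (pd j f) x = pd j (pd i f) x := by
  have hd : DifferentiableAt ℝ (fderiv ℝ f) x :=
    ((hf.fderiv_right (m := (⊤ : ℕ∞)) (by simp)).differentiable (by simp)).differentiableAt
  have hsymm : IsSymmSndFDerivAt ℝ f x := hf.contDiffAt.isSymmSndFDerivAt (by rw [minSmoothness_of_isRCLikeNormedField]; exact WithTop.coe_le_coe.mpr (le_top : (2 : ℕ∞) ≤ ⊤))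
  unfold pd
  rw [fderiv_clm_apply hd (differentiableAt_const _),
    fderiv_clm_apply hd (differentiableAt_const _)]
  simp only [ContinuousLinearMap.add_apply, ContinuousLinearMap.comp_apply,
    ContinuousLinearMap.flip_apply, fderiv_const, fderiv_const_apply, Pi.zero_apply,
    ContinuousLinearMap.comp_zero, ContinuousLinearMap.zero_apply,
    ContinuousLinearMap.map_zero, add_zero, zero_add]
  exact hsymm _ _

lemma pd_sum {n : ℕ} {ι : Type*} (s : Finset ι) (f : ι → (Fin n → ℝ) → ℝ) (i : Fin n)
    (x : Fin n → ℝ) (hf : ∀ j ∈ s, DifferentiableAt ℝ (f j) x) :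
    pd i (fun y => ∑ j ∈ s, f j y) x = ∑ j ∈ s, pd i (f j) x := by
  unfold pd
  rw [fderiv_fun_sum hf]
  simp

lemma pd_mul {n : ℕ} {f g : (Fin n → ℝ) → ℝ} (i : Fin n) (x : Fin n → ℝ)
    (hf : DifferentiableAt ℝ f x) (hg : DifferentiableAt ℝ g x) :
    pd i (fun y => f y * g y) x = pd i f x * g x + f x * pd i g x := by
  unfold pd
  rw [fderiv_fun_mul hf hg]
  simp
  ring

lemma pd_const_mul {n : ℕ} {g : (Fin n → ℝ) → ℝ} (c : ℝ) (i : Fin n) (x : Fin n → ℝ)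
    (hg : DifferentiableAt ℝ g x) :
    pd i (fun y => c * g y) x = c * pd i g x := by
  unfold pd
  rw [fderiv_const_mul hg]
  simp

lemma pd_cmul2 {n : ℕ} (c : ℝ) {A B : (Fin n → ℝ) → ℝ} (hA : ContDiff ℝ (⊤ : ℕ∞) A)
    (hB : ContDiff ℝ (⊤ : ℕ∞) B) (μ : Fin n) (x : Fin n → ℝ) :
    pd μ (fun y => c * A y * B y) x = c * (pd μ A x * B x + A x * pd μ B x) := by
  have dA : DifferentiableAt ℝ A x := (hA.differentiable (by simp)).differentiableAt
  have dB : DifferentiableAt ℝ B x := (hB.differentiable (by simp)).differentiableAt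
  rw [pd_mul μ x ((differentiableAt_const c).fun_mul dA) dB, pd_const_mul c μ x dA]
  ring

lemma strip {n : ℕ} (η : Matrix (Fin n) (Fin n) ℝ) (hηinv : IsUnit η.det)
    (X Y : Fin n → ℝ) (h : ∀ β, ∑ ν, η β ν * X ν = ∑ ν, η β ν * Y ν) : X = Y := by
  have h2 : η.mulVec X = η.mulVec Y := by
    funext β
    simpa [Matrix.mulVec, dotProduct] using h β
  have := congrArg (fun v => η⁻¹.mulVec v) h2
  simpa [Matrix.mulVec_mulVec, Matrix.nonsing_inv_mul η hηinv] using this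

open Finset in
lemma sum_rot3 {M : Type*} [AddCommMonoid M] {ι₁ ι₂ ι₃ : Type*}
    [Fintype ι₁] [Fintype ι₂] [Fintype ι₃] (f : ι₁ → ι₂ → ι₃ → M) :
    ∑ i, ∑ j, ∑ k, f i j k = ∑ k, ∑ i, ∑ j, f i j k := by
  calc ∑ i, ∑ j, ∑ k, f i j k = ∑ i, ∑ k, ∑ j, f i j k :=
        Finset.sum_congr rfl fun i _ => Finset.sum_comm
    _ = ∑ k, ∑ i, ∑ j, f i j k := Finset.sum_comm

open Finset in
lemma sum_comm4 {M : Type*} [AddCommMonoid M] {ι₁ ι₂ ι₃ ι₄ : Type*}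
    [Fintype ι₁] [Fintype ι₂] [Fintype ι₃] [Fintype ι₄] (f : ι₁ → ι₂ → ι₃ → ι₄ → M) :
    ∑ i, ∑ j, ∑ k, ∑ l, f i j k l = ∑ k, ∑ l, ∑ i, ∑ j, f i j k l := by
  calc ∑ i, ∑ j, ∑ k, ∑ l, f i j k l = ∑ i, ∑ k, ∑ j, ∑ l, f i j k l :=
        Finset.sum_congr rfl fun i _ => Finset.sum_comm
    _ = ∑ k, ∑ i, ∑ j, ∑ l, f i j k l := Finset.sum_comm
    _ = ∑ k, ∑ i, ∑ l, ∑ j, f i j k l :=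
        Finset.sum_congr rfl fun k _ => Finset.sum_congr rfl fun i _ => Finset.sum_comm
    _ = ∑ k, ∑ l, ∑ i, ∑ j, f i j k l :=
        Finset.sum_congr rfl fun k _ => Finset.sum_comm

/-- The contraction `L_ν^{αγ} = η^{ρκ} ∂_α∂_ρ∂_ν F ∂_γ∂_κ F` at a fixed point. -/
def lent3 {n : ℕ} (η : Matrix (Fin n) (Fin n) ℝ) (T : Fin n → Fin n → Fin n → ℝ)
    (G : Fin n → Fin n → ℝ) (ν α γ : Fin n) : ℝ :=
  ∑ ρ, ∑ κ, η ρ κ * T α ρ ν * G γ κ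

def Yf {n : ℕ} (η : Matrix (Fin n) (Fin n) ℝ) (T : Fin n → Fin n → Fin n → ℝ)
    (G : Fin n → Fin n → ℝ) (t b p q : Fin n) : ℝ :=
  ∑ ρ, ∑ d, T t b ρ * η ρ d * lent3 η T G d p q

def Vf {n : ℕ} (η : Matrix (Fin n) (Fin n) ℝ) (T : Fin n → Fin n → Fin n → ℝ)
    (t b p e : Fin n) : ℝ :=
  ∑ ρ, ∑ d, T t b ρ * η ρ d * T p e d

section KeyAlg

variable {n : ℕ} (η : Matrix (Fin n) (Fin n) ℝ) (T : Fin n → Fin n → Fin n → ℝ)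
  (G : Fin n → Fin n → ℝ)

variable (hη : ∀ a b, η a b = η b a)
  (hT12 : ∀ a b c, T a b c = T b a c)
  (hT23 : ∀ a b c, T a b c = T a c b)
  (hW : ∀ ν α μ γ, ∑ ρ, ∑ κ, η ρ κ * T α ρ ν * T μ γ κ
      = ∑ ρ, ∑ κ, η ρ κ * T μ ρ ν * T α γ κ)
  (hs : ∀ ν α γ, lent3 η T G ν α γ = lent3 η T G ν γ α)

include hT12 hT23 in
lemma T13 : ∀ a b c, T a b c = T c b a := by
  intro a b c
  rw [hT23, hT12, hT23]

include hs hT12 hT23 in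
lemma E1 : ∀ t x y z, ∑ ρ, ∑ d, lent3 η T G t x ρ * η ρ d * lent3 η T G d y z
    = ∑ b, ∑ c, η b c * G x c * Yf η T G t b y z := by
  intro t x y z
  calc ∑ ρ, ∑ d, lent3 η T G t x ρ * η ρ d * lent3 η T G d y z
      = ∑ ρ, ∑ d, (∑ b, ∑ c, η b c * T ρ b t * G x c) * η ρ d * lent3 η T G d y z := by
        refine Finset.sum_congr rfl fun ρ _ => Finset.sum_congr rfl fun d _ => ?_
        rw [hs t x ρ]
        rfl
    _ = ∑ ρ, ∑ d, ∑ b, ∑ c, η b c * T ρ b t * G x c * η ρ d * lent3 η T G d y z := by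
        simp only [Finset.sum_mul]
    _ = ∑ b, ∑ c, ∑ ρ, ∑ d, η b c * T ρ b t * G x c * η ρ d * lent3 η T G d y z :=
        sum_comm4 _
    _ = ∑ b, ∑ c, ∑ ρ, ∑ d, η b c * G x c * (T t b ρ * η ρ d * lent3 η T G d y z) := by
        refine Finset.sum_congr rfl fun b _ => Finset.sum_congr rfl fun c _ =>
          Finset.sum_congr rfl fun ρ _ => Finset.sum_congr rfl fun d _ => ?_
        rw [T13 T hT12 hT23 ρ b t]
        ring
    _ = ∑ b, ∑ c, η b c * G x c * Yf η T G t b y z := by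
        simp only [Yf, Finset.mul_sum]

include hs in
lemma Ysym : ∀ t b p q, Yf η T G t b p q = Yf η T G t b q p := by
  intro t b p q
  unfold Yf
  refine Finset.sum_congr rfl fun ρ _ => Finset.sum_congr rfl fun d _ => ?_
  rw [hs d p q]

lemma Ylem : ∀ t b p q, Yf η T G t b p q = ∑ e, ∑ f, η e f * G q f * Vf η T t b p e := by
  intro t b p q
  calc Yf η T G t b p q
      = ∑ ρ, ∑ d, ∑ e, ∑ f, T t b ρ * η ρ d * (η e f * T p e d * G q f) := by
        unfold Yf lent3
        simp only [Finset.mul_sum]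
    _ = ∑ e, ∑ f, ∑ ρ, ∑ d, T t b ρ * η ρ d * (η e f * T p e d * G q f) := sum_comm4 _
    _ = ∑ e, ∑ f, η e f * G q f * Vf η T t b p e := by
        unfold Vf
        simp only [Finset.mul_sum]
        refine Finset.sum_congr rfl fun e _ => Finset.sum_congr rfl fun f _ =>
          Finset.sum_congr rfl fun ρ _ => Finset.sum_congr rfl fun d _ => ?_
        ring

include hη in
lemma Vswap : ∀ t b p e, Vf η T t b p e = Vf η T p e t b := by
  intro t b p e
  unfold Vf
  rw [Finset.sum_comm]
  refine Finset.sum_congr rfl fun ρ _ => Finset.sum_congr rfl fun d _ => ?_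
  rw [hη d ρ]
  ring

include hW hT23 in
lemma Vsym13 : ∀ t b p e, Vf η T t b p e = Vf η T p b t e := by
  intro t b p e
  unfold Vf
  calc ∑ ρ, ∑ d, T t b ρ * η ρ d * T p e d
      = ∑ ρ, ∑ d, η ρ d * T t ρ b * T p e d := by
        refine Finset.sum_congr rfl fun ρ _ => Finset.sum_congr rfl fun d _ => ?_
        rw [hT23 t b ρ]; ring
    _ = ∑ ρ, ∑ d, η ρ d * T p ρ b * T t e d := hW b t p e
    _ = ∑ ρ, ∑ d, T p b ρ * η ρ d * T t e d := by
        refine Finset.sum_congr rfl fun ρ _ => Finset.sum_congr rfl fun d _ => ?_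
        rw [hT23 p b ρ]; ring

include hη hW hT23 in
lemma VsymBE : ∀ t b p e, Vf η T t b p e = Vf η T t e p b := by
  intro t b p e
  rw [Vswap η T hη, Vsym13 η T hT23 hW]

include hη hW hT23 in
lemma step4 : ∀ t α β γ, ∑ b, ∑ c, η b c * G α c * Yf η T G t b β γ
    = ∑ b, ∑ c, η b c * G γ c * Yf η T G t b β α := by
  intro t α β γ
  calc ∑ b, ∑ c, η b c * G α c * Yf η T G t b β γ
      = ∑ b, ∑ c, ∑ e, ∑ f, η b c * G α c * (η e f * G γ f * Vf η T t b β e) := by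
        refine Finset.sum_congr rfl fun b _ => Finset.sum_congr rfl fun c _ => ?_
        rw [Ylem η T G t b β γ, Finset.mul_sum]
        exact Finset.sum_congr rfl fun e _ => by rw [Finset.mul_sum]
    _ = ∑ e, ∑ f, ∑ b, ∑ c, η b c * G α c * (η e f * G γ f * Vf η T t b β e) := sum_comm4 _
    _ = ∑ b, ∑ c, ∑ e, ∑ f, η e f * G α f * (η b c * G γ c * Vf η T t e β b) := rfl
    _ = ∑ b, ∑ c, ∑ e, ∑ f, η b c * G γ c * (η e f * G α f * Vf η T t b β e) := by
        refine Finset.sum_congr rfl fun b _ => Finset.sum_congr rfl fun c _ =>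
          Finset.sum_congr rfl fun e _ => Finset.sum_congr rfl fun f _ => ?_
        rw [VsymBE η T hη hT23 hW t e β b]
        ring
    _ = ∑ b, ∑ c, η b c * G γ c * Yf η T G t b β α := by
        refine Finset.sum_congr rfl fun b _ => Finset.sum_congr rfl fun c _ => ?_
        rw [Ylem η T G t b β α, Finset.mul_sum]
        refine Eq.symm ?_
        exact Finset.sum_congr rfl fun e _ => by rw [Finset.mul_sum]

include hη hW hT12 hT23 hs in
lemma key_alg : ∀ t α β γ,
    ∑ ρ, ∑ d, lent3 η T G t α ρ * η ρ d * lent3 η T G d β γ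
    = ∑ ρ, ∑ d, lent3 η T G t γ ρ * η ρ d * lent3 η T G d α β := by
  intro t α β γ
  calc ∑ ρ, ∑ d, lent3 η T G t α ρ * η ρ d * lent3 η T G d β γ
      = ∑ b, ∑ c, η b c * G α c * Yf η T G t b β γ := E1 η T G hT12 hT23 hs t α β γ
    _ = ∑ b, ∑ c, η b c * G γ c * Yf η T G t b β α := step4 η T G hη hT23 hW t α β γ
    _ = ∑ b, ∑ c, η b c * G γ c * Yf η T G t b α β := by
        refine Finset.sum_congr rfl fun b _ => Finset.sum_congr rfl fun c _ => ?_
        rw [Ysym η T G hs t b β α]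
    _ = ∑ ρ, ∑ d, lent3 η T G t γ ρ * η ρ d * lent3 η T G d α β :=
        (E1 η T G hT12 hT23 hs t γ α β).symm

end KeyAlg

/-- Bäcklund transformation relating WDVV-type and oriented
associativity equations: if `η^{βν} η^{ρκ} ∂_α∂_ρ∂_ν F ∂_γ∂_κ F = ∂_α∂_γ H^β`,
then `F` satisfies the associativity equations and `H` the oriented ones. -/
theorem backlund_wdvv_to_oriented
    {n : ℕ} (hn : 1 ≤ n)
    (η : Matrix (Fin n) (Fin n) ℝ)
    (hηsymm : ∀ α β, η α β = η β α)
    (hηinv : IsUnit η.det)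
    (F : (Fin n → ℝ) → ℝ)
    (H : Fin n → (Fin n → ℝ) → ℝ)
    (hF : ContDiff ℝ (⊤ : ℕ∞) F)
    (hH : ∀ α, ContDiff ℝ (⊤ : ℕ∞) (H α))
    (hBT : ∀ α β γ, ∀ x : Fin n → ℝ,
      ∑ ν, ∑ ρ, ∑ κ, η β ν * η ρ κ * pd α (pd ρ (pd ν F)) x * pd γ (pd κ F) x
        = pd α (pd γ (H β)) x) :
    (∀ α β ν ρ, ∀ x : Fin n → ℝ,
      ∑ δ, ∑ γ, pd α (pd β (pd δ F)) x * η δ γ * pd γ (pd ν (pd ρ F)) x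
        = ∑ δ, ∑ γ, pd α (pd ν (pd δ F)) x * η δ γ * pd γ (pd β (pd ρ F)) x) ∧
    (∀ α β γ ν, ∀ x : Fin n → ℝ,
      ∑ ρ, pd α (pd ρ (H ν)) x * pd β (pd γ (H ρ)) x
        = ∑ ρ, pd α (pd β (H ρ)) x * pd ρ (pd γ (H ν)) x) := by
  -- smoothness of iterated partial derivatives
  have hF1 : ∀ c, ContDiff ℝ (⊤ : ℕ∞) (pd c F) := fun c => pd_contDiff c hF
  have hF2 : ∀ b c, ContDiff ℝ (⊤ : ℕ∞) (pd b (pd c F)) := fun b c => pd_contDiff b (hF1 c)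
  have hF3 : ∀ a b c, ContDiff ℝ (⊤ : ℕ∞) (pd a (pd b (pd c F))) :=
    fun a b c => pd_contDiff a (hF2 b c)
  have hH1 : ∀ γ β, ContDiff ℝ (⊤ : ℕ∞) (pd γ (H β)) := fun γ β => pd_contDiff γ (hH β)
  -- symmetry of iterated partial derivatives
  have hT12 : ∀ (x : Fin n → ℝ) (a b c : Fin n),
      pd a (pd b (pd c F)) x = pd b (pd a (pd c F)) x :=
    fun x a b c => pd_comm a b (hF1 c) x
  have hT23 : ∀ (x : Fin n → ℝ) (a b c : Fin n),
      pd a (pd b (pd c F)) x = pd a (pd c (pd b F)) x := by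
    intro x a b c
    have h : pd b (pd c F) = pd c (pd b F) := funext fun y => pd_comm b c hF y
    rw [h]
  have hGsym : ∀ (x : Fin n → ℝ) (a b : Fin n), pd a (pd b F) x = pd b (pd a F) x :=
    fun x a b => pd_comm a b hF x
  -- the function version of the Bäcklund relation
  have hBTfun : ∀ α β γ, (fun y => ∑ ν, ∑ ρ, ∑ κ,
      η β ν * η ρ κ * pd α (pd ρ (pd ν F)) y * pd γ (pd κ F) y) = pd α (pd γ (H β)) :=
    fun α β γ => funext fun y => hBT α β γ y
  -- derivative of the Bäcklund LHS
  have hder : ∀ (α β γ μ : Fin n) (x : Fin n → ℝ),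
      pd μ (fun y => ∑ ν, ∑ ρ, ∑ κ,
          η β ν * η ρ κ * pd α (pd ρ (pd ν F)) y * pd γ (pd κ F) y) x
      = ∑ ν, ∑ ρ, ∑ κ, η β ν * η ρ κ *
          (pd μ (pd α (pd ρ (pd ν F))) x * pd γ (pd κ F) x
            + pd α (pd ρ (pd ν F)) x * pd μ (pd γ (pd κ F)) x) := by
    intro α β γ μ x
    have dsummand : ∀ (ν ρ κ : Fin n) (y : Fin n → ℝ), DifferentiableAt ℝ
        (fun y => η β ν * η ρ κ * pd α (pd ρ (pd ν F)) y * pd γ (pd κ F) y) y :=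
      fun ν ρ κ y => (((differentiableAt_const _).mul (pd_diffAt α (hF2 ρ ν) y)).mul
        (pd_diffAt γ (hF1 κ) y))
    have d2 : ∀ (ν ρ : Fin n) (y : Fin n → ℝ), DifferentiableAt ℝ
        (fun y => ∑ κ, η β ν * η ρ κ * pd α (pd ρ (pd ν F)) y * pd γ (pd κ F) y) y :=
      fun ν ρ y => DifferentiableAt.fun_sum fun κ _ => dsummand ν ρ κ y
    have d1 : ∀ (ν : Fin n) (y : Fin n → ℝ), DifferentiableAt ℝ
        (fun y => ∑ ρ, ∑ κ, η β ν * η ρ κ * pd α (pd ρ (pd ν F)) y * pd γ (pd κ F) y) y :=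
      fun ν y => DifferentiableAt.fun_sum fun ρ _ => d2 ν ρ y
    rw [pd_sum Finset.univ _ μ x (fun ν _ => d1 ν x)]
    refine Finset.sum_congr rfl fun ν _ => ?_
    rw [pd_sum Finset.univ _ μ x (fun ρ _ => d2 ν ρ x)]
    refine Finset.sum_congr rfl fun ρ _ => ?_
    rw [pd_sum Finset.univ _ μ x (fun κ _ => dsummand ν ρ κ x)]
    refine Finset.sum_congr rfl fun κ _ => ?_
    exact pd_cmul2 (η β ν * η ρ κ) (hF3 α ρ ν) (hF2 γ κ) μ x
  -- the contracted WDVV identity (differentiate hBT, use symmetry of 2nd derivatives)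
  have hW : ∀ (x : Fin n → ℝ) (b a m g : Fin n),
      ∑ ρ, ∑ κ, η ρ κ * pd a (pd ρ (pd b F)) x * pd m (pd g (pd κ F)) x
      = ∑ ρ, ∑ κ, η ρ κ * pd m (pd ρ (pd b F)) x * pd a (pd g (pd κ F)) x := by
    intro x b a m g
    have main : ∀ β,
        ∑ ν', η β ν' * (∑ ρ', ∑ κ, η ρ' κ * pd a (pd ρ' (pd ν' F)) x * pd m (pd g (pd κ F)) x)
        = ∑ ν', η β ν' *
            (∑ ρ', ∑ κ, η ρ' κ * pd m (pd ρ' (pd ν' F)) x * pd a (pd g (pd κ F)) x) := by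
      intro β
      have e1 : (∑ ν', ∑ ρ', ∑ κ, η β ν' * η ρ' κ *
            (pd m (pd a (pd ρ' (pd ν' F))) x * pd g (pd κ F) x
              + pd a (pd ρ' (pd ν' F)) x * pd m (pd g (pd κ F)) x))
          = (∑ ν', ∑ ρ', ∑ κ, η β ν' * η ρ' κ *
            (pd m (pd a (pd ρ' (pd ν' F))) x * pd g (pd κ F) x
              + pd m (pd ρ' (pd ν' F)) x * pd a (pd g (pd κ F)) x)) := by
        calc (∑ ν', ∑ ρ', ∑ κ, η β ν' * η ρ' κ *
              (pd m (pd a (pd ρ' (pd ν' F))) x * pd g (pd κ F) x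
                + pd a (pd ρ' (pd ν' F)) x * pd m (pd g (pd κ F)) x))
            = pd m (fun y => ∑ ν', ∑ ρ', ∑ κ,
                η β ν' * η ρ' κ * pd a (pd ρ' (pd ν' F)) y * pd g (pd κ F) y) x :=
              (hder a β g m x).symm
          _ = pd m (pd a (pd g (H β))) x := by rw [hBTfun a β g]
          _ = pd a (pd m (pd g (H β))) x := pd_comm m a (hH1 g β) x
          _ = pd a (fun y => ∑ ν', ∑ ρ', ∑ κ,
                η β ν' * η ρ' κ * pd m (pd ρ' (pd ν' F)) y * pd g (pd κ F) y) x := by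
              rw [hBTfun m β g]
          _ = ∑ ν', ∑ ρ', ∑ κ, η β ν' * η ρ' κ *
                (pd a (pd m (pd ρ' (pd ν' F))) x * pd g (pd κ F) x
                  + pd m (pd ρ' (pd ν' F)) x * pd a (pd g (pd κ F)) x) := hder m β g a x
          _ = ∑ ν', ∑ ρ', ∑ κ, η β ν' * η ρ' κ *
                (pd m (pd a (pd ρ' (pd ν' F))) x * pd g (pd κ F) x
                  + pd m (pd ρ' (pd ν' F)) x * pd a (pd g (pd κ F)) x) := by
              refine Finset.sum_congr rfl fun ν' _ => Finset.sum_congr rfl fun ρ' _ =>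
                Finset.sum_congr rfl fun κ _ => ?_
              rw [pd_comm a m (hF2 ρ' ν') x]
      have e2 : (∑ ν', ∑ ρ', ∑ κ, η β ν' * η ρ' κ *
            (pd a (pd ρ' (pd ν' F)) x * pd m (pd g (pd κ F)) x))
          = (∑ ν', ∑ ρ', ∑ κ, η β ν' * η ρ' κ *
            (pd m (pd ρ' (pd ν' F)) x * pd a (pd g (pd κ F)) x)) := by
        simp only [mul_add, Finset.sum_add_distrib] at e1
        exact add_left_cancel e1
      calc ∑ ν', η β ν' *
              (∑ ρ', ∑ κ, η ρ' κ * pd a (pd ρ' (pd ν' F)) x * pd m (pd g (pd κ F)) x)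
          = ∑ ν', ∑ ρ', ∑ κ, η β ν' * η ρ' κ *
              (pd a (pd ρ' (pd ν' F)) x * pd m (pd g (pd κ F)) x) := by
            simp only [Finset.mul_sum]
            refine Finset.sum_congr rfl fun ν' _ => Finset.sum_congr rfl fun ρ' _ =>
              Finset.sum_congr rfl fun κ _ => ?_
            ring
        _ = ∑ ν', ∑ ρ', ∑ κ, η β ν' * η ρ' κ *
              (pd m (pd ρ' (pd ν' F)) x * pd a (pd g (pd κ F)) x) := e2
        _ = ∑ ν', η β ν' *
              (∑ ρ', ∑ κ, η ρ' κ * pd m (pd ρ' (pd ν' F)) x * pd a (pd g (pd κ F)) x) := by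
            simp only [Finset.mul_sum]
            refine Finset.sum_congr rfl fun ν' _ => Finset.sum_congr rfl fun ρ' _ =>
              Finset.sum_congr rfl fun κ _ => ?_
            ring
    exact congrFun (strip η hηinv _ _ main) b
  -- the Bäcklund relation in terms of `lent3`
  have hBT2 : ∀ (α β γ : Fin n) (x : Fin n → ℝ),
      ∑ ν', η β ν' * lent3 η (fun p q r => pd p (pd q (pd r F)) x)
          (fun p q => pd p (pd q F) x) ν' α γ
        = pd α (pd γ (H β)) x := by
    intro α β γ x
    rw [← hBT α β γ x]
    simp only [lent3, Finset.mul_sum]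
    refine Finset.sum_congr rfl fun ν' _ => Finset.sum_congr rfl fun ρ' _ =>
      Finset.sum_congr rfl fun κ _ => ?_
    ring
  -- symmetry of `lent3` in its last two arguments
  have hsL : ∀ (x : Fin n → ℝ) (ν' α γ : Fin n),
      lent3 η (fun p q r => pd p (pd q (pd r F)) x) (fun p q => pd p (pd q F) x) ν' α γ
      = lent3 η (fun p q r => pd p (pd q (pd r F)) x) (fun p q => pd p (pd q F) x) ν' γ α := by
    intro x ν' α γ
    refine congrFun (strip η hηinv
      (fun a => lent3 η (fun p q r => pd p (pd q (pd r F)) x)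
        (fun p q => pd p (pd q F) x) a α γ)
      (fun a => lent3 η (fun p q r => pd p (pd q (pd r F)) x)
        (fun p q => pd p (pd q F) x) a γ α) (fun β => ?_)) ν'
    rw [hBT2 α β γ x, hBT2 γ β α x]
    exact pd_comm α γ (hH β) x
  constructor
  · -- WDVV-type associativity equations
    intro α β ν ρ x
    calc ∑ δ, ∑ γ', pd α (pd β (pd δ F)) x * η δ γ' * pd γ' (pd ν (pd ρ F)) x
        = ∑ δ, ∑ γ', η δ γ' * pd β (pd δ (pd α F)) x * pd ν (pd ρ (pd γ' F)) x := by
          refine Finset.sum_congr rfl fun δ _ => Finset.sum_congr rfl fun γ' _ => ?_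
          rw [hT12 x α β δ, hT23 x β α δ, hT12 x γ' ν ρ, hT23 x ν γ' ρ]
          ring
      _ = ∑ δ, ∑ γ', η δ γ' * pd ν (pd δ (pd α F)) x * pd β (pd ρ (pd γ' F)) x :=
          hW x α β ν ρ
      _ = ∑ δ, ∑ γ', pd α (pd ν (pd δ F)) x * η δ γ' * pd γ' (pd β (pd ρ F)) x := by
          refine Finset.sum_congr rfl fun δ _ => Finset.sum_congr rfl fun γ' _ => ?_
          rw [hT12 x α ν δ, hT23 x ν α δ, hT12 x γ' β ρ, hT23 x β γ' ρ]
          ring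
  · -- oriented associativity equations
    intro α β γ ν x
    have hη' : ∀ p q, η p q = η q p := hηsymm
    have hT12' : ∀ p q r, pd p (pd q (pd r F)) x = pd q (pd p (pd r F)) x :=
      fun p q r => hT12 x p q r
    have hT23' : ∀ p q r, pd p (pd q (pd r F)) x = pd p (pd r (pd q F)) x :=
      fun p q r => hT23 x p q r
    have key := key_alg η (fun p q r => pd p (pd q (pd r F)) x) (fun p q => pd p (pd q F) x)
      hη' hT12' hT23' (fun b' a' m' g' => hW x b' a' m' g') (fun ν' α' γ' => hsL x ν' α' γ')
    calc ∑ ρ', pd α (pd ρ' (H ν)) x * pd β (pd γ (H ρ')) x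
        = ∑ ρ', (∑ a, η ν a * lent3 η (fun p q r => pd p (pd q (pd r F)) x)
              (fun p q => pd p (pd q F) x) a α ρ') *
            (∑ d, η ρ' d * lent3 η (fun p q r => pd p (pd q (pd r F)) x)
              (fun p q => pd p (pd q F) x) d β γ) := by
          refine Finset.sum_congr rfl fun ρ' _ => ?_
          rw [hBT2 α ν ρ' x, hBT2 β ρ' γ x]
      _ = ∑ ρ', ∑ d, ∑ a, (η ν a * lent3 η (fun p q r => pd p (pd q (pd r F)) x)
              (fun p q => pd p (pd q F) x) a α ρ') *
            (η ρ' d * lent3 η (fun p q r => pd p (pd q (pd r F)) x)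
              (fun p q => pd p (pd q F) x) d β γ) := by
          simp only [Finset.sum_mul, Finset.mul_sum]
      _ = ∑ a, ∑ ρ', ∑ d, (η ν a * lent3 η (fun p q r => pd p (pd q (pd r F)) x)
              (fun p q => pd p (pd q F) x) a α ρ') *
            (η ρ' d * lent3 η (fun p q r => pd p (pd q (pd r F)) x)
              (fun p q => pd p (pd q F) x) d β γ) := sum_rot3 _
      _ = ∑ a, η ν a * (∑ ρ', ∑ d, lent3 η (fun p q r => pd p (pd q (pd r F)) x)
              (fun p q => pd p (pd q F) x) a α ρ' * η ρ' d *
            lent3 η (fun p q r => pd p (pd q (pd r F)) x)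
              (fun p q => pd p (pd q F) x) d β γ) := by
          simp only [Finset.mul_sum]
          refine Finset.sum_congr rfl fun a _ => Finset.sum_congr rfl fun ρ' _ =>
            Finset.sum_congr rfl fun d _ => ?_
          ring
      _ = ∑ a, η ν a * (∑ ρ', ∑ d, lent3 η (fun p q r => pd p (pd q (pd r F)) x)
              (fun p q => pd p (pd q F) x) a γ ρ' * η ρ' d *
            lent3 η (fun p q r => pd p (pd q (pd r F)) x)
              (fun p q => pd p (pd q F) x) d α β) := by
          refine Finset.sum_congr rfl fun a _ => ?_
          rw [key a α β γ]
      _ = ∑ ρ', pd α (pd β (H ρ')) x * pd ρ' (pd γ (H ν)) x := by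
          refine Eq.symm ?_
          calc ∑ ρ', pd α (pd β (H ρ')) x * pd ρ' (pd γ (H ν)) x
              = ∑ ρ', (∑ a, η ρ' a * lent3 η (fun p q r => pd p (pd q (pd r F)) x)
                    (fun p q => pd p (pd q F) x) a α β) *
                  (∑ d, η ν d * lent3 η (fun p q r => pd p (pd q (pd r F)) x)
                    (fun p q => pd p (pd q F) x) d ρ' γ) := by
                refine Finset.sum_congr rfl fun ρ' _ => ?_
                rw [hBT2 α ρ' β x, hBT2 ρ' ν γ x]
            _ = ∑ ρ', ∑ d, ∑ a, (η ρ' a * lent3 η (fun p q r => pd p (pd q (pd r F)) x)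
                    (fun p q => pd p (pd q F) x) a α β) *
                  (η ν d * lent3 η (fun p q r => pd p (pd q (pd r F)) x)
                    (fun p q => pd p (pd q F) x) d ρ' γ) := by
                simp only [Finset.sum_mul, Finset.mul_sum]
            _ = ∑ d, ∑ ρ', ∑ a, (η ρ' a * lent3 η (fun p q r => pd p (pd q (pd r F)) x)
                    (fun p q => pd p (pd q F) x) a α β) *
                  (η ν d * lent3 η (fun p q r => pd p (pd q (pd r F)) x)
                    (fun p q => pd p (pd q F) x) d ρ' γ) := Finset.sum_comm
            _ = ∑ d, η ν d * (∑ ρ', ∑ a, lent3 η (fun p q r => pd p (pd q (pd r F)) x)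
                    (fun p q => pd p (pd q F) x) d γ ρ' * η ρ' a *
                  lent3 η (fun p q r => pd p (pd q (pd r F)) x)
                    (fun p q => pd p (pd q F) x) a α β) := by
                simp only [Finset.mul_sum]
                refine Finset.sum_congr rfl fun d _ => Finset.sum_congr rfl fun ρ' _ =>
                  Finset.sum_congr rfl fun a _ => ?_
                rw [hsL x d ρ' γ]
                ring
            _ = ∑ a, η ν a * (∑ ρ', ∑ d, lent3 η (fun p q r => pd p (pd q (pd r F)) x)
                    (fun p q => pd p (pd q F) x) a γ ρ' * η ρ' d *
                  lent3 η (fun p q r => pd p (pd q (pd r F)) x)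
                    (fun p q => pd p (pd q F) x) d α β) := rfl
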